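/- arXiv:1209.0546 — 2 statements merged into one kernel-verified Lean document; each statement's English description precedes it below -/
import Mathlib

section
/- Let f > 0 on (0,∞), θ ≠ 0, and g := f_{-θ,sym} its (-θ)-power symmetrization. For a density matrix ρ ∈ M_n and X ∈ M_n, set ρ̃ := (1/2) diag(ρ, ρ) ∈ M_{2n} and H̃ := [[0, X],[X*, 0]] ∈ M_{2n} (Hermitian, trace zero). Then I_f^θ(ρ̃, ρ̃, H̃) = 2^{θ+1} I_g^θ(ρ, ρ, X). -/
open scoped Matrix
open Finset

structure IsSpectralDecomp {m ι : Type*} [Fintype m] [DecidableEq m] [Fintype ι]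
    (A : Matrix m m ℂ) (α : ι → ℝ) (P : ι → Matrix m m ℂ) : Prop where
  herm : ∀ i, (P i).IsHermitian
  idem : ∀ i, P i * P i = P i
  orth : ∀ i j, i ≠ j → P i * P j = 0
  sum_one : ∑ i, P i = 1
  pos : ∀ i, 0 < α i
  eq : A = ∑ i, (α i : ℂ) • P i

/-- `I_f^θ(A,B,X)` in its explicit spectral form (F-1.2). -/
noncomputable def Ith (f : ℝ → ℝ) (θ : ℝ) {m ι κ : Type*} [Fintype m] [Fintype ι] [Fintype κ]
    (α : ι → ℝ) (P : ι → Matrix m m ℂ) (β : κ → ℝ) (Q : κ → Matrix m m ℂ)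
    (X : Matrix m m ℂ) : ℂ :=
  ∑ i, ∑ j, ((Real.rpow (f (α i / β j) * β j) (-θ) : ℝ) : ℂ) * (Xᴴ * (P i * X * Q j)).trace

lemma trace_fromBlocks' {m o R : Type*} [Fintype m] [Fintype o] [AddCommMonoid R]
    (A : Matrix m m R) (B : Matrix m o R) (C : Matrix o m R) (D : Matrix o o R) :
    (Matrix.fromBlocks A B C D).trace = A.trace + D.trace := by
  simp [Matrix.trace, Fintype.sum_sum_type, Matrix.diag]

lemma key_scalar (f ftil g : ℝ → ℝ) (hf : ∀ x > (0:ℝ), 0 < f x)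
    (hftil : ∀ x, ftil x = x * f x⁻¹)
    (θ : ℝ) (hθ : θ ≠ 0)
    (hg : ∀ x, g x = Real.rpow ((Real.rpow (f x) (-θ) + Real.rpow (ftil x) (-θ)) / 2) (-1 / θ))
    (a b : ℝ) (ha : 0 < a) (hb : 0 < b) :
    Real.rpow (f (a/b) * (b/2)) (-θ) + Real.rpow (f (b/a) * (a/2)) (-θ)
      = Real.rpow 2 (θ+1) * Real.rpow (g (a/b) * b) (-θ) := by
  simp only [show Real.rpow = fun x y => x ^ y from rfl] at hg ⊢
  have hx : (0:ℝ) < a / b := div_pos ha hb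
  have hfx : 0 < f (a/b) := hf _ hx
  have hfx' : 0 < f (b/a) := hf _ (div_pos hb ha)
  have hftilx : 0 < ftil (a/b) := by
    rw [hftil, inv_div]; exact mul_pos hx hfx'
  set S : ℝ := f (a/b) ^ (-θ) + ftil (a/b) ^ (-θ) with hS
  have hSpos : 0 < S := add_pos (Real.rpow_pos_of_pos hfx _) (Real.rpow_pos_of_pos hftilx _)
  have hgnn : 0 ≤ g (a/b) := by rw [hg]; positivity
  have hg' : g (a/b) ^ (-θ) = S / 2 := by
    rw [hg, ← Real.rpow_mul (by positivity), show (-1/θ) * (-θ) = 1 by field_simp,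
      Real.rpow_one]
  have h2 : f (b/a) * (a/2) = ftil (a/b) * (b/2) := by
    rw [hftil, inv_div]; field_simp
  rw [h2, Real.mul_rpow hfx.le (by positivity), Real.mul_rpow hftilx.le (by positivity),
    Real.mul_rpow hgnn hb.le, hg',
    Real.div_rpow hb.le (by norm_num), Real.rpow_add (by norm_num : (0:ℝ) < 2),
    Real.rpow_one, Real.rpow_neg (by norm_num : (0:ℝ) ≤ 2)]
  have h2θ : (0:ℝ) < 2 ^ θ := Real.rpow_pos_of_pos (by norm_num) _
  field_simp
  ring

/-- for a density matrix `ρ` with spectral decomposition `(r, P)`, set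
`ρ̃ = (1/2) diag(ρ,ρ)` (spectral data indexed by `Fin k ⊕ Fin k`, eigenvalues `rᵢ/2` and
block-diagonal projections) and `H̃ = [[0,X],[X*,0]]`.  Then with `g` the `(-θ)`-power
symmetrization of `f`: `I_f^θ(ρ̃,ρ̃,H̃) = 2^{θ+1} I_g^θ(ρ,ρ,X)`. -/
theorem stmt7 {n k : ℕ} (f : ℝ → ℝ) (hf : ∀ x > (0 : ℝ), 0 < f x) (θ : ℝ) (hθ : θ ≠ 0)
    (ρ : Matrix (Fin n) (Fin n) ℂ)
    (r : Fin k → ℝ) (P : Fin k → Matrix (Fin n) (Fin n) ℂ)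
    (hρ : IsSpectralDecomp ρ r P) (hρ1 : ρ.trace = 1)
    (X : Matrix (Fin n) (Fin n) ℂ)
    (ftil g : ℝ → ℝ)
    (hftil : ∀ x, ftil x = x * f x⁻¹)
    (hg : ∀ x, g x = Real.rpow ((Real.rpow (f x) (-θ) + Real.rpow (ftil x) (-θ)) / 2) (-1 / θ))
    (r' : Fin k ⊕ Fin k → ℝ) (P' : Fin k ⊕ Fin k → Matrix (Fin n ⊕ Fin n) (Fin n ⊕ Fin n) ℂ)
    (hr' : r' = Sum.elim (fun i => r i / 2) (fun i => r i / 2))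
    (hP' : P' = Sum.elim (fun i => Matrix.fromBlocks (P i) 0 0 0)
                          (fun i => Matrix.fromBlocks 0 0 0 (P i))) :
    Ith f θ r' P' r' P' (Matrix.fromBlocks 0 X Xᴴ 0) =
      ((Real.rpow 2 (θ + 1) : ℝ) : ℂ) * Ith g θ r P r P X := by
  subst hr' hP'
  simp only [Ith, Fintype.sum_sum_type, Sum.elim_inl, Sum.elim_inr,
    Matrix.fromBlocks_conjTranspose, Matrix.conjTranspose_zero,
    Matrix.conjTranspose_conjTranspose, Matrix.fromBlocks_multiply,
    Matrix.mul_zero, Matrix.zero_mul, add_zero, zero_add,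
    trace_fromBlocks', Matrix.trace_zero, mul_zero, sum_const_zero]
  have tr_eq : ∀ i j : Fin k,
      (X * (P j * Xᴴ * P i)).trace = (Xᴴ * (P i * X * P j)).trace := by
    intro i j
    simpa only [Matrix.mul_assoc] using Matrix.trace_mul_comm (X * P j) (Xᴴ * P i)
  rw [Finset.sum_comm (s := Finset.univ) (t := Finset.univ)]
  conv_rhs => rw [Finset.sum_comm]
  have hsum2 : ∀ i j : Fin k,
      ((Real.rpow (f (r j / 2 / (r i / 2)) * (r i / 2)) (-θ) : ℝ) : ℂ)
          * (X * (P j * Xᴴ * P i)).trace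
        = ((Real.rpow (f (r j / 2 / (r i / 2)) * (r i / 2)) (-θ) : ℝ) : ℂ)
          * (Xᴴ * (P i * X * P j)).trace := by
    intro i j; rw [tr_eq]
  simp only [hsum2]
  rw [← Finset.sum_add_distrib]
  rw [Finset.mul_sum]
  refine Finset.sum_congr rfl fun i _ => ?_
  rw [← Finset.sum_add_distrib, Finset.mul_sum]
  refine Finset.sum_congr rfl fun j _ => ?_
  have hri := hρ.pos i
  have hrj := hρ.pos j
  have hdiv : ∀ a b : ℝ, 0 < b → a / 2 / (b / 2) = a / b := by
    intro a b hb; field_simp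
  rw [hdiv _ _ hrj, hdiv _ _ hri, ← add_mul]
  have hc : ((Real.rpow (f (r j / r i) * (r i / 2)) (-θ) : ℝ) : ℂ)
        + ((Real.rpow (f (r i / r j) * (r j / 2)) (-θ) : ℝ) : ℂ)
      = ((Real.rpow 2 (θ + 1) : ℝ) : ℂ)
        * ((Real.rpow (g (r j / r i) * r i) (-θ) : ℝ) : ℂ) := by
    rw [← Complex.ofReal_mul]
    norm_cast
    exact key_scalar f ftil g hf hftil θ hθ hg (r j) (r i) hrj hri
  rw [hc, mul_assoc]
end

section
/- For any fixed p, q ∈ ℝ and n ∈ ℕ, the map (A, B) ∈ P_n × P_n ↦ Tr X* A^p X B^q is jointly concave (respectively, jointly convex) for all X ∈ M_n if and only if the map (A, B) ∈ P_n × P_n ↦ A^p ⊗ B^q is jointly concave (respectively, jointly convex) with respect to the positive semidefinite order. -/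
open scoped Matrix ComplexOrder Kronecker

variable {n : ℕ}

/-- Real matrix power of a positive definite matrix via continuous functional calculus. -/
noncomputable def mpow (A : Matrix (Fin n) (Fin n) ℂ) (p : ℝ) : Matrix (Fin n) (Fin n) ℂ :=
  cfc (fun x => Real.rpow x p) A

/-- Joint concavity of `(A,B) ↦ Tr X* A^p X B^q` on `P_n × P_n` for all `X`. -/
def TraceConcave (p q : ℝ) (n : ℕ) : Prop :=
  ∀ (X A₁ A₂ B₁ B₂ : Matrix (Fin n) (Fin n) ℂ),
    A₁.PosDef → A₂.PosDef → B₁.PosDef → B₂.PosDef →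
    ∀ t : ℝ, t ∈ Set.Icc (0 : ℝ) 1 →
      t * (Xᴴ * mpow A₁ p * X * mpow B₁ q).trace.re +
          (1 - t) * (Xᴴ * mpow A₂ p * X * mpow B₂ q).trace.re ≤
        (Xᴴ * mpow (t • A₁ + (1 - t) • A₂) p * X * mpow (t • B₁ + (1 - t) • B₂) q).trace.re

/-- Joint convexity of `(A,B) ↦ Tr X* A^p X B^q` on `P_n × P_n` for all `X`. -/
def TraceConvex (p q : ℝ) (n : ℕ) : Prop :=
  ∀ (X A₁ A₂ B₁ B₂ : Matrix (Fin n) (Fin n) ℂ),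
    A₁.PosDef → A₂.PosDef → B₁.PosDef → B₂.PosDef →
    ∀ t : ℝ, t ∈ Set.Icc (0 : ℝ) 1 →
      (Xᴴ * mpow (t • A₁ + (1 - t) • A₂) p * X * mpow (t • B₁ + (1 - t) • B₂) q).trace.re ≤
        t * (Xᴴ * mpow A₁ p * X * mpow B₁ q).trace.re +
          (1 - t) * (Xᴴ * mpow A₂ p * X * mpow B₂ q).trace.re

/-- Joint concavity of `(A,B) ↦ A^p ⊗ B^q` in the positive semidefinite order. -/
def KronConcave (p q : ℝ) (n : ℕ) : Prop :=
  ∀ (A₁ A₂ B₁ B₂ : Matrix (Fin n) (Fin n) ℂ),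
    A₁.PosDef → A₂.PosDef → B₁.PosDef → B₂.PosDef →
    ∀ t : ℝ, t ∈ Set.Icc (0 : ℝ) 1 →
      (mpow (t • A₁ + (1 - t) • A₂) p ⊗ₖ mpow (t • B₁ + (1 - t) • B₂) q -
        (t • (mpow A₁ p ⊗ₖ mpow B₁ q) + (1 - t) • (mpow A₂ p ⊗ₖ mpow B₂ q))).PosSemidef

/-- Joint convexity of `(A,B) ↦ A^p ⊗ B^q` in the positive semidefinite order. -/
def KronConvex (p q : ℝ) (n : ℕ) : Prop :=
  ∀ (A₁ A₂ B₁ B₂ : Matrix (Fin n) (Fin n) ℂ),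
    A₁.PosDef → A₂.PosDef → B₁.PosDef → B₂.PosDef →
    ∀ t : ℝ, t ∈ Set.Icc (0 : ℝ) 1 →
      (t • (mpow A₁ p ⊗ₖ mpow B₁ q) + (1 - t) • (mpow A₂ p ⊗ₖ mpow B₂ q) -
        mpow (t • A₁ + (1 - t) • A₂) p ⊗ₖ mpow (t • B₁ + (1 - t) • B₂) q).PosSemidef

/-!
Reading `X` row by row as the vector `vec Xᵀ`, one has
`Tr(Xᴴ M X N) = ⟨vec Xᵀ, (M ⊗ Nᵀ) vec Xᵀ⟩`, and `(B^q)ᵀ = (Bᵀ)^q` for Hermitian `B`, because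
entrywise conjugation is a star-algebra homomorphism and hence commutes with the functional
calculus. Since `vec` is a bijection and `B ↦ Bᵀ` preserves `P_n` and convex combinations, the
trace inequalities for all `X` are exactly the quadratic-form inequalities for all vectors, that
is, the Loewner-order inequalities between the Kronecker products.
-/

namespace Matrix

variable {m n R 𝕜 : Type*} [RCLike 𝕜]

theorem IsHermitian.kronecker [CommRing R] [StarRing R] {A : Matrix m m R} {B : Matrix n n R}
    (hA : A.IsHermitian) (hB : B.IsHermitian) : (A ⊗ₖ B).IsHermitian := by
  rw [IsHermitian, conjTranspose_kronecker, hA.eq, hB.eq]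

variable [Fintype m] [Fintype n]

theorem trace_conjTranspose_mul_mul_mul_eq_dotProduct [CommRing R] [StarRing R]
    (M : Matrix m m R) (N : Matrix n n R) (X : Matrix m n R) :
    (Xᴴ * M * X * N).trace = star (vec Xᵀ) ⬝ᵥ (M ⊗ₖ Nᵀ) *ᵥ vec Xᵀ := by
  rw [kronecker_mulVec_vec, star_vec_dotProduct_vec,
    conjTranspose_transpose_eq_transpose_conjTranspose,
    show Xᴴᵀ * (Nᵀ * Xᵀ * Mᵀ) = (M * X * N * Xᴴ)ᵀ by simp only [transpose_mul, Matrix.mul_assoc],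
    trace_transpose, trace_mul_comm (M * X * N)]
  simp only [Matrix.mul_assoc]

def conjStarAlgHom [DecidableEq m] : Matrix m m 𝕜 →⋆ₐ[ℝ] Matrix m m 𝕜 :=
  { (RCLike.conjAe (K := 𝕜)).toAlgHom.mapMatrix with
    map_star' := fun A => by ext; simp }

theorem IsHermitian.cfc_transpose [DecidableEq m] {A : Matrix m m 𝕜} (hA : A.IsHermitian)
    (f : ℝ → ℝ) : cfc f Aᵀ = (cfc f A)ᵀ := by
  have hconj : ∀ {B : Matrix m m 𝕜}, B.IsHermitian → conjStarAlgHom B = Bᵀ := fun hB => by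
    ext i j; simp [conjStarAlgHom, ← hB.apply i j]
  have hfin : (spectrum ℝ A).Finite := by
    rw [hA.spectrum_real_eq_range_eigenvalues]; exact Set.finite_range _
  have key := StarAlgHomClass.map_cfc conjStarAlgHom f A (hfin.continuousOn f)
    (continuous_id.matrix_map RCLike.continuous_conj) hA.isSelfAdjoint
    (hconj hA ▸ hA.transpose.isSelfAdjoint)
  rwa [hconj hA, hconj (cfc_predicate f A), eq_comm] at key

theorem posSemidef_sub_iff_re_le {M N : Matrix m m 𝕜} (hM : M.IsHermitian) (hN : N.IsHermitian) :
    (M - N).PosSemidef ↔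
      ∀ v : m → 𝕜, RCLike.re (star v ⬝ᵥ N *ᵥ v) ≤ RCLike.re (star v ⬝ᵥ M *ᵥ v) := by
  rw [posSemidef_iff_dotProduct_mulVec, and_iff_right (hM.sub hN)]
  refine forall_congr' fun v => ?_
  rw [RCLike.nonneg_iff, and_iff_left ((hM.sub hN).im_star_dotProduct_mulVec_self v), sub_mulVec,
    dotProduct_sub, map_sub, sub_nonneg]

theorem re_star_dotProduct_smul_add_smul_mulVec (a b : ℝ) (M N : Matrix m m 𝕜) (v : m → 𝕜) :
    RCLike.re (star v ⬝ᵥ (a • M + b • N) *ᵥ v) =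
      a * RCLike.re (star v ⬝ᵥ M *ᵥ v) + b * RCLike.re (star v ⬝ᵥ N *ᵥ v) := by
  simp [add_mulVec, smul_mulVec, dotProduct_add, dotProduct_smul, RCLike.smul_re]

end Matrix

open Matrix

noncomputable def kronQuadForm (p q : ℝ) (v : Fin n × Fin n → ℂ)
    (A B : Matrix (Fin n) (Fin n) ℂ) : ℝ :=
  (star v ⬝ᵥ (mpow A p ⊗ₖ mpow B q) *ᵥ v).re

theorem isHermitian_mpow (A : Matrix (Fin n) (Fin n) ℂ) (p : ℝ) : (mpow A p).IsHermitian :=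
  cfc_predicate _ A

theorem isHermitian_mpow_kronecker_mpow (p q : ℝ) (A B : Matrix (Fin n) (Fin n) ℂ) :
    (mpow A p ⊗ₖ mpow B q).IsHermitian :=
  (isHermitian_mpow A p).kronecker (isHermitian_mpow B q)

theorem re_trace_eq_kronQuadForm (p q : ℝ) (X A : Matrix (Fin n) (Fin n) ℂ)
    {B : Matrix (Fin n) (Fin n) ℂ} (hB : B.IsHermitian) :
    (Xᴴ * mpow A p * X * mpow B q).trace.re = kronQuadForm p q (vec Xᵀ) A Bᵀ := by
  rw [trace_conjTranspose_mul_mul_mul_eq_dotProduct, kronQuadForm, mpow, mpow, mpow,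
    hB.cfc_transpose]

theorem kronQuadForm_convexComb (p q t : ℝ) (v : Fin n × Fin n → ℂ)
    (A₁ A₂ B₁ B₂ : Matrix (Fin n) (Fin n) ℂ) :
    (star v ⬝ᵥ (t • (mpow A₁ p ⊗ₖ mpow B₁ q) + (1 - t) • (mpow A₂ p ⊗ₖ mpow B₂ q)) *ᵥ v).re =
      t * kronQuadForm p q v A₁ B₁ + (1 - t) * kronQuadForm p q v A₂ B₂ := by
  simpa only [RCLike.re_to_complex, kronQuadForm] using
    re_star_dotProduct_smul_add_smul_mulVec t (1 - t) _ _ v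

theorem isHermitian_convexComb_kronecker (p q t : ℝ) (A₁ A₂ B₁ B₂ : Matrix (Fin n) (Fin n) ℂ) :
    (t • (mpow A₁ p ⊗ₖ mpow B₁ q) + (1 - t) • (mpow A₂ p ⊗ₖ mpow B₂ q)).IsHermitian :=
  ((isHermitian_mpow_kronecker_mpow p q A₁ B₁).smul (.all t)).add
    ((isHermitian_mpow_kronecker_mpow p q A₂ B₂).smul (.all (1 - t)))

theorem posSemidef_kronecker_sub_convexComb_iff (p q t : ℝ)
    (A A₁ A₂ B B₁ B₂ : Matrix (Fin n) (Fin n) ℂ) :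
    (mpow A p ⊗ₖ mpow B q -
        (t • (mpow A₁ p ⊗ₖ mpow B₁ q) + (1 - t) • (mpow A₂ p ⊗ₖ mpow B₂ q))).PosSemidef ↔
      ∀ v, t * kronQuadForm p q v A₁ B₁ + (1 - t) * kronQuadForm p q v A₂ B₂ ≤
        kronQuadForm p q v A B := by
  simp only [posSemidef_sub_iff_re_le (isHermitian_mpow_kronecker_mpow p q A B)
    (isHermitian_convexComb_kronecker p q t A₁ A₂ B₁ B₂), RCLike.re_to_complex,
    kronQuadForm_convexComb, kronQuadForm]

theorem posSemidef_convexComb_sub_kronecker_iff (p q t : ℝ)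
    (A A₁ A₂ B B₁ B₂ : Matrix (Fin n) (Fin n) ℂ) :
    (t • (mpow A₁ p ⊗ₖ mpow B₁ q) + (1 - t) • (mpow A₂ p ⊗ₖ mpow B₂ q) -
        mpow A p ⊗ₖ mpow B q).PosSemidef ↔
      ∀ v, kronQuadForm p q v A B ≤
        t * kronQuadForm p q v A₁ B₁ + (1 - t) * kronQuadForm p q v A₂ B₂ := by
  simp only [posSemidef_sub_iff_re_le (isHermitian_convexComb_kronecker p q t A₁ A₂ B₁ B₂)
    (isHermitian_mpow_kronecker_mpow p q A B), RCLike.re_to_complex,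
    kronQuadForm_convexComb, kronQuadForm]

theorem forall_trace_iff_forall_kronQuadForm (p q : ℝ) (R : ℝ → ℝ → ℝ → ℝ → Prop) :
    (∀ X A₁ A₂ B₁ B₂ : Matrix (Fin n) (Fin n) ℂ,
      A₁.PosDef → A₂.PosDef → B₁.PosDef → B₂.PosDef → ∀ t ∈ Set.Icc (0 : ℝ) 1,
        R t (Xᴴ * mpow A₁ p * X * mpow B₁ q).trace.re (Xᴴ * mpow A₂ p * X * mpow B₂ q).trace.re
          (Xᴴ * mpow (t • A₁ + (1 - t) • A₂) p * X * mpow (t • B₁ + (1 - t) • B₂) q).trace.re) ↔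
    ∀ A₁ A₂ B₁ B₂ : Matrix (Fin n) (Fin n) ℂ,
      A₁.PosDef → A₂.PosDef → B₁.PosDef → B₂.PosDef → ∀ t ∈ Set.Icc (0 : ℝ) 1,
        ∀ v, R t (kronQuadForm p q v A₁ B₁) (kronQuadForm p q v A₂ B₂)
          (kronQuadForm p q v (t • A₁ + (1 - t) • A₂) (t • B₁ + (1 - t) • B₂)) := by
  have hcomb : ∀ (t : ℝ) (B₁ B₂ : Matrix (Fin n) (Fin n) ℂ),
      t • B₁ᵀ + (1 - t) • B₂ᵀ = (t • B₁ + (1 - t) • B₂)ᵀ := by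
    intro t B₁ B₂; rw [transpose_add, transpose_smul, transpose_smul]
  have hherm : ∀ (t : ℝ) {B₁ B₂ : Matrix (Fin n) (Fin n) ℂ}, B₁.PosDef → B₂.PosDef →
      (t • B₁ + (1 - t) • B₂).IsHermitian := fun t _ _ hB₁ hB₂ =>
    (hB₁.isHermitian.smul (.all t)).add (hB₂.isHermitian.smul (.all (1 - t)))
  constructor
  · intro h A₁ A₂ B₁ B₂ hA₁ hA₂ hB₁ hB₂ t ht v
    -- `vec Xᵀ = v` for the matrix `X` with entries `X i j = v (i, j)`.
    have := h (of fun i j => v (i, j)) A₁ A₂ B₁ᵀ B₂ᵀ hA₁ hA₂ hB₁.transpose hB₂.transpose t ht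
    rwa [hcomb, re_trace_eq_kronQuadForm p q _ _ hB₁.isHermitian.transpose,
      re_trace_eq_kronQuadForm p q _ _ hB₂.isHermitian.transpose,
      re_trace_eq_kronQuadForm p q _ _ (hherm t hB₁ hB₂).transpose, transpose_transpose,
      transpose_transpose, transpose_transpose] at this
  · intro h X A₁ A₂ B₁ B₂ hA₁ hA₂ hB₁ hB₂ t ht
    rw [re_trace_eq_kronQuadForm p q _ _ hB₁.isHermitian,
      re_trace_eq_kronQuadForm p q _ _ hB₂.isHermitian,
      re_trace_eq_kronQuadForm p q _ _ (hherm t hB₁ hB₂), ← hcomb]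
    exact h A₁ A₂ B₁ᵀ B₂ᵀ hA₁ hA₂ hB₁.transpose hB₂.transpose t ht (vec Xᵀ)

/-- for fixed `p, q ∈ ℝ` and `n`, joint concavity (resp. convexity) of
`(A,B) ↦ Tr X* A^p X B^q` for all `X` is equivalent to joint concavity (resp. convexity)
of `(A,B) ↦ A^p ⊗ B^q` in the positive semidefinite order. -/
theorem stmt18 (p q : ℝ) (n : ℕ) :
    (TraceConcave p q n ↔ KronConcave p q n) ∧ (TraceConvex p q n ↔ KronConvex p q n) := by
  constructor
  · simp only [KronConcave, posSemidef_kronecker_sub_convexComb_iff]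
    exact forall_trace_iff_forall_kronQuadForm p q fun t a b c => t * a + (1 - t) * b ≤ c
  · simp only [KronConvex, posSemidef_convexComb_sub_kronecker_iff]
    exact forall_trace_iff_forall_kronQuadForm p q fun t a b c => c ≤ t * a + (1 - t) * b
end
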